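/- For every k ≥ 1, the characteristic vectors over the field ZMod 2 (indexed by the coordinates {1,…,2^k−1}) of the 2-element sets in B_k are linearly independent. -/

import Mathlib

/-! Every set in `B_k` is a pair `{j, 2^a + j}` with `0 < j < 2^a` and `a < k`. Its larger
element lies in `[2^a, 2^(a+1))`, so its binary logarithm recovers `a` and then `j`: distinct sets
of `B_k` have distinct maxima, all in `{1,…,2^k − 1}`. Ordered by their maxima, the characteristic
vectors form a triangular system with ones on the diagonal, hence are linearly independent. -/

/-- `B_1 = ∅` and `B_k = B_{k−1} ∪ {{j, 2^{k−1}+j} : 1 ≤ j ≤ 2^{k−1}−1}` for `k ≥ 2`. -/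
def Bk : ℕ → Finset (Finset ℕ)
  | 0 => ∅
  | 1 => ∅
  | (k + 2) =>
      Bk (k + 1) ∪
        (Finset.Icc 1 (2 ^ (k + 1) - 1)).image (fun j => ({j, 2 ^ (k + 1) + j} : Finset ℕ))

/-- The characteristic vector over `ZMod 2` of a subset of `{1,…,N}`,
indexed by coordinates `{1,…,N}` (coordinate `i` is represented by `i - 1 : Fin N`). -/
def charVec (N : ℕ) (s : Finset ℕ) : Fin N → ZMod 2 :=
  fun i => if (i : ℕ) + 1 ∈ s then 1 else 0

open Function

theorem linearIndependent_of_triangular {R ι n : Type*} [Ring R] [NoZeroDivisors R] [LinearOrder n]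
    {v : ι → n → R} {p : ι → n} (hp : Injective p) (hdiag : ∀ i, v i (p i) ≠ 0)
    (hzero : ∀ i j, p i < p j → v i (p j) = 0) : LinearIndependent R v := by
  classical
  rw [linearIndependent_iff']
  intro t g hsum
  by_contra! ⟨i, hi, hgi⟩
  obtain ⟨j, hj, hjmax⟩ :=
    (t.filter (g · ≠ 0)).exists_max_image p ⟨i, Finset.mem_filter.2 ⟨hi, hgi⟩⟩
  rw [Finset.mem_filter] at hj
  have hcoord : ∑ x ∈ t, g x * v x (p j) = g j * v j (p j) := by
    refine Finset.sum_eq_single_of_mem j hj.1 fun x hx hxj => ?_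
    by_cases hgx : g x = 0
    · rw [hgx, zero_mul]
    · have hlt : p x < p j :=
        (hjmax x (Finset.mem_filter.2 ⟨hx, hgx⟩)).lt_of_ne (hp.ne hxj)
      rw [hzero x j hlt, mul_zero]
  have hsum_j := congrFun hsum (p j)
  simp only [Finset.sum_apply, Pi.smul_apply, smul_eq_mul, Pi.zero_apply, hcoord] at hsum_j
  exact mul_ne_zero hj.2 (hdiag j) hsum_j

theorem linearIndependent_charVec_of_max {ι : Type*} {N : ℕ} {s : ι → Finset ℕ} {t : ι → ℕ}
    (ht : Injective t) (ht_mem : ∀ i, t i ∈ s i) (ht_max : ∀ i, ∀ a ∈ s i, a ≤ t i)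
    (ht_pos : ∀ i, 0 < t i) (ht_le : ∀ i, t i ≤ N) :
    LinearIndependent (ZMod 2) fun i => charVec N (s i) := by
  let p : ι → Fin N := fun i => ⟨t i - 1, by have := ht_pos i; have := ht_le i; omega⟩
  have hp : ∀ i, (p i : ℕ) + 1 = t i := fun i => Nat.sub_add_cancel (ht_pos i)
  refine linearIndependent_of_triangular (p := p) (fun i j hij => ht ?_) (fun i => ?_)
    (fun i j hij => ?_)
  · rw [← hp i, ← hp j, hij]
  · simp [charVec, hp, ht_mem]
  · have hlt : t i < t j := by rw [← hp i, ← hp j]; exact Nat.succ_lt_succ hij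
    simp only [charVec, hp, ite_eq_right_iff, one_ne_zero, imp_false]
    exact fun hmem => (ht_max i _ hmem).not_gt hlt

theorem exists_eq_pair_of_mem_Bk :
    ∀ {k : ℕ} {s : Finset ℕ}, s ∈ Bk k → ∃ a j, 0 < j ∧ j < 2 ^ a ∧ a < k ∧ s = {j, 2 ^ a + j}
  | 0, _, hs | 1, _, hs => by simp [Bk] at hs
  | k + 2, s, hs => by
    simp only [Bk, Finset.mem_union, Finset.mem_image, Finset.mem_Icc] at hs
    rcases hs with hs | ⟨j, ⟨hj_pos, hj_le⟩, rfl⟩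
    · obtain ⟨a, j, hj_pos, hj_lt, ha, rfl⟩ := exists_eq_pair_of_mem_Bk hs
      exact ⟨a, j, hj_pos, hj_lt, by omega, rfl⟩
    · exact ⟨k + 1, j, hj_pos, by have := Nat.one_le_two_pow (n := k + 1); omega, by omega, rfl⟩

theorem sup_pair_two_pow_add (a j : ℕ) : ({j, 2 ^ a + j} : Finset ℕ).sup id = 2 ^ a + j := by
  simp

theorem eq_of_two_pow_add_eq {a b j j' : ℕ} (hj : j < 2 ^ a) (hj' : j' < 2 ^ b)
    (h : 2 ^ a + j = 2 ^ b + j') : a = b ∧ j = j' := by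
  have log_eq {c i : ℕ} (hi : i < 2 ^ c) : Nat.log 2 (2 ^ c + i) = c :=
    Nat.log_eq_of_pow_le_of_lt_pow (Nat.le_add_right _ _) (by rw [pow_succ]; omega)
  obtain rfl : a = b := by rw [← log_eq hj, h, log_eq hj']
  exact ⟨rfl, by omega⟩

theorem stmt_2_general (k : ℕ) :
    LinearIndependent (ZMod 2)
      (fun s : {x // x ∈ Bk k} => charVec (2 ^ k - 1) (s : Finset ℕ)) := by
  refine linearIndependent_charVec_of_max (t := fun s => (s : Finset ℕ).sup id) ?_ ?_
    (fun s a ha => Finset.le_sup (f := id) ha) ?_ ?_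
  · rintro ⟨s, hs⟩ ⟨s', hs'⟩ h
    obtain ⟨a, j, -, hj, -, rfl⟩ := exists_eq_pair_of_mem_Bk hs
    obtain ⟨a', j', -, hj', -, rfl⟩ := exists_eq_pair_of_mem_Bk hs'
    simp only [sup_pair_two_pow_add] at h
    obtain ⟨rfl, rfl⟩ := eq_of_two_pow_add_eq hj hj' h
    rfl
  all_goals
    rintro ⟨s, hs⟩
    obtain ⟨a, j, hj_pos, hj, ha, rfl⟩ := exists_eq_pair_of_mem_Bk hs
    simp only [sup_pair_two_pow_add]
  · simp
  · omega
  · have := Nat.pow_le_pow_right two_pos ha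
    rw [pow_succ] at this
    omega

/-- The characteristic vectors of the 2-element sets in `B_k` are linearly independent
over `ZMod 2`. -/
theorem stmt_2 (k : ℕ) (hk : 1 ≤ k) :
    LinearIndependent (ZMod 2)
      (fun s : {x // x ∈ Bk k} => charVec (2 ^ k - 1) (s : Finset ℕ)) :=
  stmt_2_general k
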